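/- Consider the quadratic form $q(a_1,\dots,a_5) = -2a_1^2 - 2a_2^2 - 2a_3^2 - a_4^2 - a_5^2 + 2(a_1a_2 + a_1a_3 + a_2a_4 + a_3a_5)$ on $\mathbb{R}^5$. Then $q$ is negative semi-definite, and $q(\mathbf{a}) = 0$ if and only if $a_1 = a_2 = a_3 = a_4 = a_5$. -/
import Mathlib

/-!
STATEMENT 7: The quadratic form
`q(a₁,…,a₅) = -2a₁² - 2a₂² - 2a₃² - a₄² - a₅² + 2(a₁a₂ + a₁a₃ + a₂a₄ + a₃a₅)`
on `ℝ⁵` is negative semi-definite, and `q(a) = 0` iff `a₁ = a₂ = a₃ = a₄ = a₅`.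
-/

theorem quadratic_form_neg_semidef (a₁ a₂ a₃ a₄ a₅ : ℝ) :
    -2*a₁^2 - 2*a₂^2 - 2*a₃^2 - a₄^2 - a₅^2 + 2*(a₁*a₂ + a₁*a₃ + a₂*a₄ + a₃*a₅) ≤ 0
    ∧ (-2*a₁^2 - 2*a₂^2 - 2*a₃^2 - a₄^2 - a₅^2 + 2*(a₁*a₂ + a₁*a₃ + a₂*a₄ + a₃*a₅) = 0
        ↔ a₁ = a₂ ∧ a₂ = a₃ ∧ a₃ = a₄ ∧ a₄ = a₅) := by
  have key : -2*a₁^2 - 2*a₂^2 - 2*a₃^2 - a₄^2 - a₅^2 + 2*(a₁*a₂ + a₁*a₃ + a₂*a₄ + a₃*a₅)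
      = -((a₁-a₂)^2 + (a₁-a₃)^2 + (a₂-a₄)^2 + (a₃-a₅)^2) := by ring
  constructor
  · rw [key, neg_nonpos]; positivity
  · rw [key]
    constructor
    · intro h
      have h1 : (a₁-a₂)^2 = 0 := by nlinarith [sq_nonneg (a₁-a₃), sq_nonneg (a₂-a₄), sq_nonneg (a₃-a₅)]
      have h2 : (a₁-a₃)^2 = 0 := by nlinarith [sq_nonneg (a₁-a₂), sq_nonneg (a₂-a₄), sq_nonneg (a₃-a₅)]
      have h3 : (a₂-a₄)^2 = 0 := by nlinarith [sq_nonneg (a₁-a₂), sq_nonneg (a₁-a₃), sq_nonneg (a₃-a₅)]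
      have h4 : (a₃-a₅)^2 = 0 := by nlinarith [sq_nonneg (a₁-a₂), sq_nonneg (a₁-a₃), sq_nonneg (a₂-a₄)]
      have e1 : a₁ - a₂ = 0 := by nlinarith [h1]
      have e2 : a₁ - a₃ = 0 := by nlinarith [h2]
      have e3 : a₂ - a₄ = 0 := by nlinarith [h3]
      have e4 : a₃ - a₅ = 0 := by nlinarith [h4]
      refine ⟨by linarith, by linarith, by linarith, by linarith⟩
    · rintro ⟨h1, h2, h3, h4⟩; subst h1 h2 h3 h4; ring
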